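/- arXiv:1410.1579 — 4 statements merged into one kernel-verified Lean document; each statement's English description precedes it below -/
import Mathlib

section
/- For every integer n ≥ 3 and every directed graph on n vertices having at most 3n − 6 edges (in particular, every orientation of a planar graph on n vertices), the number of directed simple paths is at most n²·3ⁿ. -/
/-!
A directed simple path `v₀, …, v_t` is an initial segment of the orbit of `v₀` under any map `σ`
with `σ vᵢ = vᵢ₊₁`, and `σ` can be taken to choose at every vertex one of its out-neighbours
(or the vertex itself if it has none). So the paths are at most `n · n · ∏ᵥ max(d⁺(v), 1)`
many, and as `k³ ≤ 3ᵏ` the product is at most `3^(|E|/3) ≤ 3^(n-2)`.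
-/

open scoped BigOperators

noncomputable section

/-- Points of the plane. -/
abbrev Pt : Type := ℝ × ℝ

/-- Dot product on the plane. -/
def dotp (a b : Pt) : ℝ := a.1 * b.1 + a.2 * b.2

/-- The geometric conditions making `(V, E)` a plane straight-line graph:
every edge joins two distinct points of `V`, no point of `V` lies in the open
segment of an edge, and the open segments of two distinct edges are disjoint. -/
def ValidEdges (V : Finset Pt) (E : Finset (Sym2 Pt)) : Prop :=
  (∀ a b : Pt, s(a, b) ∈ E → a ∈ V ∧ b ∈ V ∧ a ≠ b) ∧
  (∀ a b : Pt, s(a, b) ∈ E → ∀ v ∈ V, v ∉ openSegment ℝ a b) ∧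
  (∀ a b c d : Pt, s(a, b) ∈ E → s(c, d) ∈ E → s(a, b) ≠ s(c, d) →
    openSegment ℝ a b ∩ openSegment ℝ c d = ∅)

/-- A plane straight-line graph. -/
structure PSLG where
  V : Finset Pt
  E : Finset (Sym2 Pt)
  valid : ValidEdges V E

/-- A path in `G`: a sequence of at least two vertices, consecutive ones joined by edges. -/
def IsPathIn (G : PSLG) (L : List Pt) : Prop :=
  2 ≤ L.length ∧ L.Chain' (fun a b => s(a, b) ∈ G.E)

/-- An x-monotone path: x-coordinates strictly increasing along the path. -/
def IsXMonotonePath (G : PSLG) (L : List Pt) : Prop :=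
  IsPathIn G L ∧ L.Chain' (fun a b => a.1 < b.1)

/-- Monotonicity of a vertex sequence in direction `u`. -/
def MonotoneInDir (u : Pt) (L : List Pt) : Prop :=
  L.Chain' (fun a b => 0 < dotp (b - a) u)

/-- A monotone path: monotone in some direction `u ≠ 0`. -/
def IsMonotonePath (G : PSLG) (L : List Pt) : Prop :=
  IsPathIn G L ∧ ∃ u : Pt, u ≠ 0 ∧ MonotoneInDir u L

/-- The number of x-monotone paths in `G`. -/
def xMonCount (G : PSLG) : ℕ := Set.ncard {L : List Pt | IsXMonotonePath G L}

/-- The number of monotone paths in `G`, a path and its reversal counted once. -/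
def monPathCount (G : PSLG) : ℕ :=
  Set.ncard {P : Set (List Pt) | ∃ L, IsMonotonePath G L ∧ P = {L, L.reverse}}

/-- Consecutive pairs along a cycle (including the wrap-around pair). -/
def cyclePairs (L : List Pt) : List (Pt × Pt) := L.zip (L.rotate 1)

/-- A cycle in `G`: at least 3 pairwise distinct vertices, cyclically joined by edges. -/
def IsCycleIn (G : PSLG) (L : List Pt) : Prop :=
  3 ≤ L.length ∧ L.Nodup ∧ ∀ p ∈ cyclePairs L, s(p.1, p.2) ∈ G.E

/-- The union of the closed edge segments of a cycle. -/
def cycleBody (L : List Pt) : Set Pt := ⋃ p ∈ cyclePairs L, segment ℝ p.1 p.2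

/-- A star-shaped polygon in `G`: a cycle for which some point `o` sees the boundary
in exactly one point along every ray emanating from `o`. -/
def IsStarShapedPolygon (G : PSLG) (L : List Pt) : Prop :=
  IsCycleIn G L ∧ ∃ o : Pt, ∀ d : Pt, d ≠ 0 →
    ∃! p : Pt, p ∈ cycleBody L ∧ ∃ t : ℝ, 0 ≤ t ∧ p = o + t • d

/-- The edge set of a cycle, used to count polygons. -/
def cycleEdgeSet (L : List Pt) : Finset (Sym2 Pt) :=
  ((cyclePairs L).map (fun p => s(p.1, p.2))).toFinset

/-- The number of star-shaped polygons in `G`, counted by edge sets. -/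
def starCount (G : PSLG) : ℕ :=
  Set.ncard {E' : Finset (Sym2 Pt) | ∃ L, IsStarShapedPolygon G L ∧ E' = cycleEdgeSet L}

/-- Cross product (signed area). -/
def crossp (a b : Pt) : ℝ := a.1 * b.2 - a.2 * b.1

/-- A convex polygon in `G`: a cycle whose vertices are in strictly convex position and
appear along the cycle in their convex-hull cyclic order; equivalently, for every directed
edge of the cycle all other vertices lie strictly on the same (left or right) side. -/
def IsConvexPolygon (G : PSLG) (L : List Pt) : Prop :=
  IsCycleIn G L ∧
  ((∀ p ∈ cyclePairs L, ∀ v ∈ L, v ≠ p.1 → v ≠ p.2 → 0 < crossp (p.2 - p.1) (v - p.1)) ∨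
   (∀ p ∈ cyclePairs L, ∀ v ∈ L, v ≠ p.1 → v ≠ p.2 → crossp (p.2 - p.1) (v - p.1) < 0))

/-- The number of convex polygons in `G`, counted by edge sets. -/
def convexCount (G : PSLG) : ℕ :=
  Set.ncard {E' : Finset (Sym2 Pt) | ∃ L, IsConvexPolygon G L ∧ E' = cycleEdgeSet L}

/-- A triangulation: an edge-maximal plane straight-line graph. -/
def PSLG.IsTriangulation (G : PSLG) : Prop :=
  ∀ a ∈ G.V, ∀ b ∈ G.V, a ≠ b → s(a, b) ∉ G.E → ¬ ValidEdges G.V (insert s(a, b) G.E)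

/-- An orientation of a PSLG: each edge `{a, b}` receives exactly one of the ordered
pairs `(a, b)`, `(b, a)`. -/
def IsOrientation (G : PSLG) (D : Finset (Pt × Pt)) : Prop :=
  (∀ p ∈ D, s(p.1, p.2) ∈ G.E) ∧
  ∀ a b : Pt, s(a, b) ∈ G.E →
    (((a, b) ∈ D ∧ (b, a) ∉ D) ∨ ((b, a) ∈ D ∧ (a, b) ∉ D))

/-- A directed simple path in a directed graph on points. -/
def IsDirPath (D : Finset (Pt × Pt)) (L : List Pt) : Prop :=
  2 ≤ L.length ∧ L.Nodup ∧ L.Chain' (fun a b => (a, b) ∈ D)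

/-- The number of directed simple paths. -/
def dirPathCount (D : Finset (Pt × Pt)) : ℕ := Set.ncard {L : List Pt | IsDirPath D L}

/-- No three of the points of `S` are collinear. -/
def NoThreeCollinear (S : Finset Pt) : Prop :=
  ∀ p ∈ S, ∀ q ∈ S, ∀ r ∈ S, p ≠ q → p ≠ r → q ≠ r → ¬ Collinear ℝ ({p, q, r} : Set Pt)

/-- A maximal monotone path: not a proper subpath (up to reversal) of another
monotone path of `G`. -/
def IsMaximalMonotonePath (G : PSLG) (L : List Pt) : Prop :=
  IsMonotonePath G L ∧ ∀ M : List Pt, IsMonotonePath G M →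
    (L <:+: M ∨ L.reverse <:+: M) → (L = M ∨ L.reverse = M)

theorem List.exists_map_range_iterate_eq {α : Type*} [DecidableEq α] {T : α → Set α}
    (hT : ∀ a, (T a).Nonempty) :
    ∀ (s : α) (l : List α), (s :: l).Nodup → (s :: l).IsChain (fun a b => b ∈ T a) →
      ∃ σ : α → α, (∀ a, σ a ∈ T a) ∧ (List.range (l.length + 1)).map (σ^[·] s) = s :: l
  | s, [], _, _ => ⟨fun a => (hT a).some, fun a => (hT a).some_mem, rfl⟩
  | s, b :: l, hnd, hch => by
    obtain ⟨hsb, hch⟩ := List.isChain_cons_cons.mp hch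
    obtain ⟨hs, hnd⟩ := List.nodup_cons.mp hnd
    obtain ⟨σ, hσT, hσ⟩ := exists_map_range_iterate_eq hT b l hnd hch
    have hmem : ∀ i < l.length + 1, σ^[i] b ∈ b :: l := fun i hi =>
      hσ ▸ List.mem_map_of_mem (List.mem_range.mpr hi)
    -- `s` does not occur along the orbit of `b`, so redirecting `σ` at `s` leaves it unchanged.
    have horbit : ∀ i < l.length + 1, (Function.update σ s b)^[i] b = σ^[i] b := by
      intro i hi
      induction i with
      | zero => rfl
      | succ i ih =>
        rw [Function.iterate_succ_apply', Function.iterate_succ_apply', ih (by omega),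
          Function.update_of_ne (ne_of_mem_of_not_mem (hmem i (by omega)) hs)]
    refine ⟨Function.update σ s b, fun a => ?_, ?_⟩
    · rcases eq_or_ne a s with rfl | ha
      · simpa using hsb
      · simpa [ha] using hσT a
    · rw [List.length_cons, List.range_succ_eq_map, List.map_cons, List.map_map, ← hσ]
      refine congrArg₂ _ rfl (List.map_congr_left fun i hi => ?_)
      simp only [Function.comp_apply, Function.iterate_succ_apply, Function.update_self]
      exact horbit i (List.mem_range.mp hi)

theorem pow_three_le_three_pow (k : ℕ) : k ^ 3 ≤ 3 ^ k := by
  rcases Nat.lt_or_ge k 3 with hk | hk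
  · interval_cases k <;> norm_num
  · induction k, hk using Nat.le_induction with
    | base => norm_num
    | succ k hk ih =>
      have hk2 : 3 * k ≤ k * k := Nat.mul_le_mul_right k hk
      calc (k + 1) ^ 3 ≤ 3 * k ^ 3 := by nlinarith [Nat.mul_le_mul_right k hk2]
        _ ≤ 3 ^ (k + 1) := by rw [pow_succ' 3 k]; exact Nat.mul_le_mul_left 3 ih

section

variable {n : ℕ} (E : Finset (Fin n × Fin n))

/-- A vertex without out-neighbours gets itself as a dummy successor. -/
def successorChoices (v : Fin n) : Finset (Fin n) :=
  if ∃ w, (v, w) ∈ E then ({w | (v, w) ∈ E} : Finset (Fin n)) else {v}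

theorem successorChoices_nonempty (v : Fin n) : (successorChoices E v).Nonempty := by
  unfold successorChoices
  split_ifs with h
  · obtain ⟨w, hw⟩ := h
    exact ⟨w, by simpa using hw⟩
  · exact Finset.singleton_nonempty v

theorem mem_successorChoices_of_mem {v w : Fin n} (h : (v, w) ∈ E) :
    w ∈ successorChoices E v := by
  simp [successorChoices, show ∃ w, (v, w) ∈ E from ⟨w, h⟩, h]

theorem card_successorChoices_pow_three_le (v : Fin n) :
    (successorChoices E v).card ^ 3 ≤ 3 ^ (E.filter (·.1 = v)).card := by
  unfold successorChoices
  split_ifs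
  · have hcard : ({w | (v, w) ∈ E} : Finset (Fin n)).card ≤ (E.filter (·.1 = v)).card :=
      Finset.card_le_card_of_injOn (fun w => (v, w)) (fun w hw => by simpa using hw)
        (fun _ _ _ _ h => (Prod.mk.inj h).2)
    exact (Nat.pow_le_pow_left hcard 3).trans (pow_three_le_three_pow _)
  · simpa using Nat.one_le_pow _ _ (by norm_num)

theorem prod_card_successorChoices_pow_three_le :
    (∏ v, (successorChoices E v).card) ^ 3 ≤ 3 ^ E.card := by
  calc (∏ v, (successorChoices E v).card) ^ 3 = ∏ v, (successorChoices E v).card ^ 3 :=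
        (Finset.prod_pow _ _ _).symm
    _ ≤ ∏ v, 3 ^ (E.filter (·.1 = v)).card :=
        Finset.prod_le_prod' fun v _ => card_successorChoices_pow_three_le E v
    _ = 3 ^ E.card := by
        rw [Finset.prod_pow_eq_pow_sum,
          ← Finset.card_eq_sum_card_fiberwise fun p _ => Finset.mem_coe.mpr (Finset.mem_univ p.1)]

theorem ncard_simplePaths_le :
    {L : List (Fin n) | 2 ≤ L.length ∧ L.Nodup ∧ L.IsChain (fun a b => (a, b) ∈ E)}.ncard ≤
      n ^ 2 * ∏ v, (successorChoices E v).card := by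
  let orbit : Fin n × ℕ × (Fin n → Fin n) → List (Fin n) := fun x =>
    (List.range (x.2.1 + 1)).map (x.2.2^[·] x.1)
  have hsub : {L : List (Fin n) | 2 ≤ L.length ∧ L.Nodup ∧ L.IsChain (fun a b => (a, b) ∈ E)} ⊆
      ((Finset.univ ×ˢ Finset.range n ×ˢ Fintype.piFinset (successorChoices E)).image orbit :
        Set (List (Fin n))) := by
    rintro (_ | ⟨s, l⟩) ⟨hlen, hnd, hch⟩
    · simp at hlen
    obtain ⟨σ, hσ, horbit⟩ := List.exists_map_range_iterate_eq
      (fun v => Finset.coe_nonempty.mpr (successorChoices_nonempty E v)) s l hnd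
      (hch.imp fun _ _ h => Finset.mem_coe.mpr (mem_successorChoices_of_mem E h))
    have hl : l.length < n := by simpa using hnd.length_le_card
    exact Finset.mem_coe.mpr (Finset.mem_image.mpr
      ⟨(s, l.length, σ), by simpa [hl, Fintype.mem_piFinset] using hσ, horbit⟩)
  calc _ ≤ ((Finset.univ ×ˢ Finset.range n ×ˢ
          Fintype.piFinset (successorChoices E)).image orbit).card := by
        rw [← Set.ncard_coe_finset]; exact Set.ncard_le_ncard hsub
    _ ≤ (Finset.univ ×ˢ Finset.range n ×ˢ Fintype.piFinset (successorChoices E)).card :=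
        Finset.card_image_le
    _ = n ^ 2 * ∏ v, (successorChoices E v).card := by
        simp only [Finset.card_product, Finset.card_univ, Fintype.card_fin, Finset.card_range,
          Fintype.card_piFinset]
        ring

end

theorem directed_paths_upper_bound_general (n : ℕ)
    (E : Finset (Fin n × Fin n))
    (hcard : E.card ≤ 3 * n - 6) :
    Set.ncard {L : List (Fin n) |
        2 ≤ L.length ∧ L.Nodup ∧ L.Chain' (fun a b => (a, b) ∈ E)} ≤
      n ^ 2 * 3 ^ n := by
  have hprod : ∏ v, (successorChoices E v).card ≤ 3 ^ (n - 2) := by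
    refine (Nat.pow_le_pow_iff_left (n := 3) (by norm_num)).mp ?_
    calc (∏ v, (successorChoices E v).card) ^ 3 ≤ 3 ^ E.card :=
          prod_card_successorChoices_pow_three_le E
      _ ≤ 3 ^ (3 * (n - 2)) := Nat.pow_le_pow_right (by norm_num) (by omega)
      _ = (3 ^ (n - 2)) ^ 3 := by rw [← pow_mul, Nat.mul_comm]
  calc _ ≤ n ^ 2 * ∏ v, (successorChoices E v).card := ncard_simplePaths_le E
    _ ≤ n ^ 2 * 3 ^ n := Nat.mul_le_mul_left _
        (hprod.trans (Nat.pow_le_pow_right (by norm_num) (Nat.sub_le n 2)))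

/-- a directed graph on `n ≥ 3` vertices with at most `3n − 6` edges
has at most `n²·3ⁿ` directed simple paths. -/
theorem directed_paths_upper_bound (n : ℕ) (hn : 3 ≤ n)
    (E : Finset (Fin n × Fin n)) (hne : ∀ p ∈ E, p.1 ≠ p.2)
    (hcard : E.card ≤ 3 * n - 6) :
    Set.ncard {L : List (Fin n) |
        2 ≤ L.length ∧ L.Nodup ∧ L.Chain' (fun a b => (a, b) ∈ E)} ≤
      n ^ 2 * 3 ^ n :=
  directed_paths_upper_bound_general n E hcard

end
end

section
/- For all real numbers x and y with 1 ≤ x ≤ y, one has (3y/x)^x ≤ 3^y; that is, the function x ↦ (3n/x)^x attains its maximum over the interval [1, n] at x = n, where its value is 3ⁿ. -/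
open scoped BigOperators

noncomputable section

/-! Taking logarithms, `x log(a y / x) = x log a + x log(y / x) ≤ x log a + (y - x) ≤ y log a`
by `log t ≤ t - 1`, the last step because `log a ≥ 1`. For `a = 3` this needs only `e ≤ 3`. -/

namespace Real

variable {a x y : ℝ}

theorem mul_log_mul_div_le (ha : exp 1 ≤ a) (hx : 0 < x) (hxy : x ≤ y) :
    x * log (a * y / x) ≤ y * log a := by
  have ha0 : 0 < a := (exp_pos 1).trans_le ha
  have hy : 0 < y := hx.trans_le hxy
  have hlog_a : 1 ≤ log a := by rwa [le_log_iff_exp_le ha0]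
  have hlog_ratio : log (y / x) ≤ y / x - 1 := log_le_sub_one_of_pos (div_pos hy hx)
  calc x * log (a * y / x) = x * log a + x * log (y / x) := by
        rw [mul_div_assoc, log_mul ha0.ne' (div_pos hy hx).ne', mul_add]
    _ ≤ x * log a + x * (y / x - 1) := by gcongr
    _ = x * log a + (y - x) := by field_simp
    _ ≤ y * log a := by nlinarith [mul_nonneg (sub_nonneg.2 hxy) (sub_nonneg.2 hlog_a)]

theorem rpow_mul_div_le (ha : exp 1 ≤ a) (hx : 0 < x) (hxy : x ≤ y) :
    (a * y / x) ^ x ≤ a ^ y := by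
  have ha0 : 0 < a := (exp_pos 1).trans_le ha
  have hy : 0 < y := hx.trans_le hxy
  rw [rpow_def_of_pos (by positivity), rpow_def_of_pos ha0, exp_le_exp, mul_comm, mul_comm (log a)]
  exact mul_log_mul_div_le ha hx hxy

end Real

/-- for real `1 ≤ x ≤ y`, `(3y/x)^x ≤ 3^y` (real powers). -/
theorem rpow_three_bound (x y : ℝ) (hx : 1 ≤ x) (hxy : x ≤ y) :
    Real.rpow (3 * y / x) x ≤ Real.rpow 3 y :=
  Real.rpow_mul_div_le (by linarith [Real.exp_one_lt_d9]) (by linarith) hxy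

end
end

section
/- Define 2×2 real matrices by M₂ = [[2,1],[1,1]] and M_k = M_{k−1}² + [[1,0],[1,1]] for k ≥ 3. Then the real number λ = (4885 + 9·√294153)/2 is an eigenvalue of M₅ (equivalently, λ² − 4885·λ + 9208 = 0, where trace M₅ = 4885 and det M₅ = 9208), and λ > 1.7003¹⁶. -/
open scoped BigOperators

noncomputable section

theorem Matrix.mulVec_fin_two_eigenvector {R : Type*} [CommRing R]
    (A : Matrix (Fin 2) (Fin 2) R) {l : R} (hl : l ^ 2 - A.trace * l + A.det = 0) :
    A.mulVec ![A 0 1, l - A 0 0] = l • ![A 0 1, l - A 0 0] := by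
  rw [Matrix.trace_fin_two, Matrix.det_fin_two] at hl
  refine funext (Fin.forall_fin_two.2 ⟨?_, ?_⟩) <;>
    simp only [Matrix.mulVec, dotProduct, Fin.sum_univ_two, Matrix.cons_val_zero,
      Matrix.cons_val_one, Pi.smul_apply, smul_eq_mul]
  · ring
  · linear_combination -hl

theorem larger_root_sq_sub_mul_add_eq_zero {t d s : ℝ} (hs : s ^ 2 = t ^ 2 - 4 * d) :
    ((t + s) / 2) ^ 2 - t * ((t + s) / 2) + d = 0 := by
  linear_combination hs / 4

theorem transfer_matrix_five (M : ℕ → Matrix (Fin 2) (Fin 2) ℝ)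
    (h2 : M 2 = !![2, 1; 1, 1])
    (hrec : ∀ k, 3 ≤ k → M k = (M (k - 1)) ^ 2 + !![1, 0; 1, 1]) :
    M 5 = !![3401, 1917; 2628, 1484] := by
  have h3 : M 3 = !![6, 3; 4, 3] := by
    rw [hrec 3 le_rfl, h2]
    norm_num [sq]
  have h4 : M 4 = !![49, 27; 37, 22] := by
    rw [hrec 4 (by norm_num), h3]
    norm_num [sq]
  rw [hrec 5 (by norm_num), h4]
  norm_num [sq]

/-- for the transfer matrices `M₂ = [[2,1],[1,1]]`,
`M_k = M_{k−1}² + [[1,0],[1,1]]`, the number `λ = (4885 + 9√294153)/2` is an eigenvalue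
of `M₅` (with `trace M₅ = 4885`, `det M₅ = 9208`, so `λ² − 4885λ + 9208 = 0`), and
`λ > 1.7003¹⁶`. -/
theorem transfer_matrix_eigenvalue (M : ℕ → Matrix (Fin 2) (Fin 2) ℝ)
    (h2 : M 2 = !![2, 1; 1, 1])
    (hrec : ∀ k, 3 ≤ k → M k = (M (k - 1)) ^ 2 + !![1, 0; 1, 1]) :
    (Matrix.trace (M 5) = 4885 ∧ Matrix.det (M 5) = 9208) ∧
    ((4885 + 9 * Real.sqrt 294153) / 2) ^ 2 -
        4885 * ((4885 + 9 * Real.sqrt 294153) / 2) + 9208 = 0 ∧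
    (∃ v : Fin 2 → ℝ, v ≠ 0 ∧
      (M 5).mulVec v = ((4885 + 9 * Real.sqrt 294153) / 2) • v) ∧
    (1.7003 : ℝ) ^ (16 : ℕ) < (4885 + 9 * Real.sqrt 294153) / 2 := by
  have h5 := transfer_matrix_five M h2 hrec
  have htrace : (M 5).trace = 4885 := by rw [h5, Matrix.trace_fin_two_of]; norm_num
  have hdet : (M 5).det = 9208 := by rw [h5, Matrix.det_fin_two_of]; norm_num
  have hsqrt : Real.sqrt 294153 ^ 2 = 294153 := Real.sq_sqrt (by norm_num)
  -- the discriminant `4885² - 4·9208` equals `9² · 294153`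
  have hroot := larger_root_sq_sub_mul_add_eq_zero (t := 4885) (d := 9208)
    (s := 9 * Real.sqrt 294153) (by linear_combination 81 * hsqrt)
  refine ⟨⟨htrace, hdet⟩, hroot,
    ⟨_, ?_, Matrix.mulVec_fin_two_eigenvector (M 5) (by rwa [htrace, hdet])⟩, ?_⟩
  · intro h
    simpa [h5] using congrFun h 0
  · -- `1.7003¹⁶ ≈ 4879.9`, so the cruder bound `√294153 > 541` would not suffice
    have hsqrt_gt : (542 : ℝ) < Real.sqrt 294153 := by
      rw [Real.lt_sqrt (by norm_num)]
      norm_num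
    calc (1.7003 : ℝ) ^ (16 : ℕ) < (4885 + 9 * 542) / 2 := by norm_num
      _ < _ := by gcongr

end
end

section
/- For every integer n ≥ 3 there exist a set of n points in ℝ², a triangulation T of it, and an orientation of the edges of T such that the oriented graph contains exactly 3n − 5 directed simple paths (namely 2n − 3 paths of length 1 and n − 2 paths of length 2, and no longer directed paths). -/
open scoped BigOperators

noncomputable section

/-!
Put the points `P i = (i, i²)`, `0 ≤ i < n`, on a parabola, so that they are in convex position,
and triangulate their convex hull by the fan of chords from `P 0` together with the boundary path
`P 1, P 2, …, P (n - 1)`. Orient every fan edge towards `P 0` and every path edge from its even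
to its odd endpoint. Then `P 0` is a sink and no two path arcs compose, so the directed paths
with two arcs are exactly `x → y → P 0` for the `n - 2` path arcs `x → y`, and there are none
longer.
-/

def parabola (t : ℝ) : Pt := (t, t ^ 2)

theorem parabola_injective : Function.Injective parabola :=
  fun _ _ h => congrArg Prod.fst h

theorem mem_openSegment_parabola_iff {a b : ℝ} (hab : a < b) {z : Pt} :
    z ∈ openSegment ℝ (parabola a) (parabola b) ↔
      a < z.1 ∧ z.1 < b ∧ z.2 = (a + b) * z.1 - a * b := by
  rw [openSegment_eq_image']
  constructor
  · rintro ⟨θ, ⟨hθ₀, hθ₁⟩, rfl⟩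
    simp only [parabola, Prod.fst_add, Prod.snd_add, Prod.smul_fst, Prod.smul_snd,
      Prod.fst_sub, Prod.snd_sub, smul_eq_mul]
    refine ⟨by nlinarith, by nlinarith, by ring⟩
  · rintro ⟨h₁, h₂, h₃⟩
    refine ⟨(z.1 - a) / (b - a), ⟨div_pos (by linarith) (by linarith),
      (div_lt_one (by linarith)).2 (by linarith)⟩, ?_⟩
    have hba : b - a ≠ 0 := by linarith
    ext
    · simp only [parabola, Prod.fst_add, Prod.smul_fst, Prod.fst_sub, smul_eq_mul]
      field_simp
      ring
    · simp only [parabola, Prod.snd_add, Prod.smul_snd, Prod.snd_sub, smul_eq_mul, h₃]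
      field_simp
      ring

theorem parabola_notMem_openSegment {a b : ℝ} (hab : a < b) (t : ℝ) :
    parabola t ∉ openSegment ℝ (parabola a) (parabola b) := by
  rw [mem_openSegment_parabola_iff hab]
  rintro ⟨h₁, h₂, h₃⟩
  simp only [parabola] at h₁ h₂ h₃
  nlinarith [mul_pos (sub_pos.2 h₁) (sub_pos.2 h₂)]

theorem openSegment_parabola_inter_eq_empty {a b c d : ℝ} (hab : a < b) (hcd : c < d)
    (hne : (a, b) ≠ (c, d)) (h₁ : ¬ (a < c ∧ c < b ∧ b < d))
    (h₂ : ¬ (c < a ∧ a < d ∧ d < b)) :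
    openSegment ℝ (parabola a) (parabola b) ∩
      openSegment ℝ (parabola c) (parabola d) = ∅ := by
  refine Set.eq_empty_of_forall_notMem fun z ⟨hz₁, hz₂⟩ => ?_
  obtain ⟨ha, hb, hz⟩ := (mem_openSegment_parabola_iff hab).1 hz₁
  obtain ⟨hc, hd, hz'⟩ := (mem_openSegment_parabola_iff hcd).1 hz₂
  -- both chords pass through `z`, so `(x - a) (b - x) = (x - c) (d - x)` at `x = z.1`
  have key : (z.1 - a) * (b - z.1) = (z.1 - c) * (d - z.1) := by linear_combination hz' - hz
  rcases lt_trichotomy a c with hac | rfl | hca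
  · have hdb : d ≤ b := by by_contra!; exact h₁ ⟨hac, by linarith, this⟩
    nlinarith [mul_le_mul_of_nonneg_left (by linarith : d - z.1 ≤ b - z.1)
      (by linarith : (0 : ℝ) ≤ z.1 - c)]
  · have : b = d := by
      have := mul_left_cancel₀ (by linarith : z.1 - a ≠ 0) key
      linarith
    exact hne (by rw [this])
  · have hbd : b ≤ d := by by_contra!; exact h₂ ⟨hca, by linarith, this⟩
    nlinarith [mul_le_mul_of_nonneg_left (by linarith : b - z.1 ≤ d - z.1)
      (by linarith : (0 : ℝ) ≤ z.1 - a)]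

theorem openSegment_parabola_inter_nonempty {a b c d : ℝ} (hac : a < c) (hcb : c < b)
    (hbd : b < d) :
    (openSegment ℝ (parabola a) (parabola b) ∩
      openSegment ℝ (parabola c) (parabola d)).Nonempty := by
  -- the two chord lines meet where `(x - a) (x - b) = (x - c) (x - d)`, a linear equation in `x`
  set k := c + d - a - b
  have hk : 0 < k := by
    nlinarith [mul_pos (sub_pos.2 hac) (sub_pos.2 hcb), mul_pos (sub_pos.2 hcb) (sub_pos.2 hbd)]
  set x := (c * d - a * b) / k
  have hx : k * x = c * d - a * b := by simp only [x]; field_simp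
  have hcx : c < x := by nlinarith [mul_pos (sub_pos.2 hac) (sub_pos.2 hcb)]
  have hxb : x < b := by nlinarith [mul_pos (sub_pos.2 hcb) (sub_pos.2 hbd)]
  refine ⟨(x, (a + b) * x - a * b), (mem_openSegment_parabola_iff (hac.trans hcb)).2
    ⟨by simp only; linarith, hxb, rfl⟩, (mem_openSegment_parabola_iff (hcb.trans hbd)).2
    ⟨hcx, by simp only; linarith, by simp only [k] at hx; linear_combination -hx⟩⟩

theorem PSLG.isTriangulation_of_forall_crossing (G : PSLG)
    (h : ∀ a ∈ G.V, ∀ b ∈ G.V, a ≠ b → s(a, b) ∉ G.E →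
      ∃ c d, s(c, d) ∈ G.E ∧ (openSegment ℝ a b ∩ openSegment ℝ c d).Nonempty) :
    G.IsTriangulation := by
  intro a ha b hb hab hE hvalid
  obtain ⟨c, d, hcd, hcross⟩ := h a ha b hb hab hE
  have := hvalid.2.2 a b c d (Finset.mem_insert_self _ _) (Finset.mem_insert_of_mem hcd)
    (fun heq => hE (heq ▸ hcd))
  exact hcross.ne_empty this

theorem isOrientation_of_antisymm {G : PSLG} {D : Finset (Pt × Pt)}
    (hE : G.E = D.image fun p => s(p.1, p.2)) (hD : ∀ a b, (a, b) ∈ D → (b, a) ∉ D) :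
    IsOrientation G D := by
  unfold IsOrientation
  rw [hE]
  refine ⟨fun p hp => Finset.mem_image_of_mem _ hp, fun a b hab => ?_⟩
  obtain ⟨⟨x, y⟩, hxy, he⟩ := Finset.mem_image.1 hab
  rcases Sym2.eq_iff.1 he with ⟨rfl, rfl⟩ | ⟨rfl, rfl⟩
  · exact Or.inl ⟨hxy, hD _ _ hxy⟩
  · exact Or.inr ⟨hxy, hD _ _ hxy⟩

theorem isDirPath_iff {D : Finset (Pt × Pt)} {L : List Pt} :
    IsDirPath D L ↔ 2 ≤ L.length ∧ L.Nodup ∧ L.IsChain (fun a b => (a, b) ∈ D) :=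
  Iff.rfl

theorem isDirPath_pair_iff {D : Finset (Pt × Pt)} {a b : Pt} :
    IsDirPath D [a, b] ↔ a ≠ b ∧ (a, b) ∈ D := by
  simp [isDirPath_iff]

theorem isDirPath_triple_iff {D : Finset (Pt × Pt)} {a b c : Pt} :
    IsDirPath D [a, b, c] ↔ [a, b, c].Nodup ∧ (a, b) ∈ D ∧ (b, c) ∈ D := by
  simp [isDirPath_iff, and_assoc]

theorem setOf_isDirPath_length_two {D : Finset (Pt × Pt)} (hD : ∀ a, (a, a) ∉ D) :
    {L | IsDirPath D L ∧ L.length = 2} = ↑(D.image fun p => [p.1, p.2]) := by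
  ext L
  constructor
  · rintro ⟨hL, hlen⟩
    match L, hlen with
    | [a, b], _ => exact Finset.mem_image.2 ⟨(a, b), (isDirPath_pair_iff.1 hL).2, rfl⟩
  · intro hL
    obtain ⟨⟨a, b⟩, hab, rfl⟩ := Finset.mem_image.1 hL
    refine ⟨isDirPath_pair_iff.2 ⟨?_, hab⟩, rfl⟩
    rintro (rfl : a = b)
    exact hD a hab

theorem card_image_pair (D : Finset (Pt × Pt)) : (D.image fun p => [p.1, p.2]).card = D.card :=
  Finset.card_image_of_injective _ fun p q h => by
    simp only [List.cons.injEq, and_true] at h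
    exact Prod.ext h.1 h.2

theorem IsDirPath.length_le_three {D : Finset (Pt × Pt)}
    (hD : ∀ a b c d, (a, b) ∈ D → (b, c) ∈ D → (c, d) ∉ D) {L : List Pt}
    (hL : IsDirPath D L) :
    L.length ≤ 3 := by
  match L, hL with
  | [], _ | [_], _ | [_, _], _ | [_, _, _], _ => simp
  | a :: b :: c :: d :: _, hL =>
    obtain ⟨-, -, hab, hbc, hcd, -⟩ := by
      simpa only [isDirPath_iff, List.isChain_cons_cons] using hL
    exact (hD a b c d hab hbc hcd).elim

theorem dirPathCount_eq_add {D : Finset (Pt × Pt)}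
    (hlen : ∀ L, IsDirPath D L → L.length ≤ 3)
    (h₂ : {L | IsDirPath D L ∧ L.length = 2}.Finite)
    (h₃ : {L | IsDirPath D L ∧ L.length = 3}.Finite) :
    dirPathCount D = {L | IsDirPath D L ∧ L.length = 2}.ncard +
      {L | IsDirPath D L ∧ L.length = 3}.ncard := by
  have hsplit : {L | IsDirPath D L} =
      {L | IsDirPath D L ∧ L.length = 2} ∪ {L | IsDirPath D L ∧ L.length = 3} := by
    refine Set.ext fun L => ⟨fun hL => ?_, fun hL => hL.elim And.left And.left⟩
    rcases (by have := hL.1; have := hlen L hL; omega : L.length = 2 ∨ L.length = 3) with h | h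
    exacts [Or.inl ⟨hL, h⟩, Or.inr ⟨hL, h⟩]
  rw [dirPathCount, hsplit, Set.ncard_union_eq _ h₂ h₃]
  exact Set.disjoint_left.2 fun L ⟨_, h⟩ ⟨_, h'⟩ => by omega

namespace ParabolaFan

open Finset

def chainArc (i : ℕ) : ℕ × ℕ := if Even i then (i, i + 1) else (i + 1, i)

def fanArcs (n : ℕ) : Finset (ℕ × ℕ) := (Ico 1 n).image fun k => (k, 0)

def chainArcs (n : ℕ) : Finset (ℕ × ℕ) := (Ico 1 (n - 1)).image chainArc

def arcs (n : ℕ) : Finset (ℕ × ℕ) := fanArcs n ∪ chainArcs n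

theorem mem_fanArcs {n i j : ℕ} : (i, j) ∈ fanArcs n ↔ 1 ≤ i ∧ i < n ∧ j = 0 := by
  simp [fanArcs, and_assoc, eq_comm]

theorem mem_chainArcs {n i j : ℕ} :
    (i, j) ∈ chainArcs n ↔
      1 ≤ i ∧ 1 ≤ j ∧ i < n ∧ j < n ∧ (j = i + 1 ∨ i = j + 1) ∧ i % 2 = 0 := by
  simp only [chainArcs, chainArc, mem_image, mem_Ico, Nat.even_iff]
  constructor
  · rintro ⟨m, hm, h⟩
    split_ifs at h with hm2 <;> simp only [Prod.mk.injEq] at h <;> omega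
  · rintro ⟨hi, hj, hin, hjn, rfl | rfl, h2⟩
    · exact ⟨i, by omega, by simp [h2]⟩
    · exact ⟨j, by omega, by simp [show j % 2 ≠ 0 by omega]⟩

theorem mem_arcs {n i j : ℕ} :
    (i, j) ∈ arcs n ↔ 1 ≤ i ∧ i < n ∧
      (j = 0 ∨ (1 ≤ j ∧ j < n ∧ (j = i + 1 ∨ i = j + 1) ∧ i % 2 = 0)) := by
  rw [arcs, mem_union, mem_fanArcs, mem_chainArcs]
  omega

theorem card_fanArcs (n : ℕ) : (fanArcs n).card = n - 1 := by
  rw [fanArcs, card_image_of_injective _ fun _ _ h => (Prod.mk.inj h).1, Nat.card_Ico]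

theorem card_chainArcs (n : ℕ) : (chainArcs n).card = n - 2 := by
  have hinj : Function.Injective chainArc := fun i j h => by
    unfold chainArc at h
    split_ifs at h <;> simp only [Prod.mk.injEq] at h <;> omega
  rw [chainArcs, card_image_of_injective _ hinj, Nat.card_Ico]
  omega

theorem card_arcs (n : ℕ) : (arcs n).card = 2 * n - 3 := by
  have hdisj : Disjoint (fanArcs n) (chainArcs n) := by
    rw [disjoint_left]
    rintro ⟨i, j⟩ h h'
    rw [mem_fanArcs] at h
    rw [mem_chainArcs] at h'
    omega
  rw [arcs, card_union_of_disjoint hdisj, card_fanArcs, card_chainArcs]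
  omega

def P : ℕ ↪ Pt := ⟨fun i => parabola i, parabola_injective.comp Nat.cast_injective⟩

theorem P_apply (i : ℕ) : P i = parabola i := rfl

def V (n : ℕ) : Finset Pt := (range n).map P

def D (n : ℕ) : Finset (Pt × Pt) := (arcs n).map (P.prodMap P)

def chainD (n : ℕ) : Finset (Pt × Pt) := (chainArcs n).map (P.prodMap P)

def E (n : ℕ) : Finset (Sym2 Pt) := (D n).image fun p => s(p.1, p.2)

theorem card_V (n : ℕ) : (V n).card = n := by
  rw [V, card_map, card_range]

theorem P_mem_V {n i : ℕ} : P i ∈ V n ↔ i < n := by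
  rw [V, mem_map' P, mem_range]

theorem mem_D {n i j : ℕ} : (P i, P j) ∈ D n ↔ (i, j) ∈ arcs n := by
  rw [D]
  exact mem_map' (f := P.prodMap P) (a := (i, j))

theorem exists_of_mem_D {n : ℕ} {p : Pt × Pt} (hp : p ∈ D n) :
    ∃ i j, (i, j) ∈ arcs n ∧ p = (P i, P j) := by
  obtain ⟨⟨i, j⟩, hij, rfl⟩ := mem_map.1 hp
  exact ⟨i, j, hij, rfl⟩

theorem mem_E_iff {n : ℕ} {e : Sym2 Pt} :
    e ∈ E n ↔ ∃ a b, a < b ∧ b < n ∧ (a = 0 ∨ b = a + 1) ∧ e = s(P a, P b) := by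
  constructor
  · intro he
    obtain ⟨p, hp, rfl⟩ := mem_image.1 he
    obtain ⟨i, j, hij, rfl⟩ := exists_of_mem_D hp
    rw [mem_arcs] at hij
    rcases lt_or_gt_of_ne (show i ≠ j by omega) with h | h
    · exact ⟨i, j, h, by omega, by omega, rfl⟩
    · exact ⟨j, i, h, by omega, by omega, Sym2.eq_swap⟩
  · rintro ⟨a, b, hab, hbn, hfan, rfl⟩
    have : (a, b) ∈ arcs n ∨ (b, a) ∈ arcs n := by simp only [mem_arcs]; omega
    rcases this with h | h
    · exact mem_image.2 ⟨(P a, P b), mem_D.2 h, rfl⟩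
    · exact mem_image.2 ⟨(P b, P a), mem_D.2 h, Sym2.eq_swap⟩

theorem openSegment_eq_of_mk_eq {x y u v : Pt} (h : s(x, y) = s(u, v)) :
    openSegment ℝ x y = openSegment ℝ u v := by
  rcases Sym2.eq_iff.1 h with ⟨rfl, rfl⟩ | ⟨rfl, rfl⟩
  · rfl
  · exact openSegment_symm ℝ _ _

theorem validEdges (n : ℕ) : ValidEdges (V n) (E n) := by
  refine ⟨fun x y hxy => ?_, fun x y hxy v hv => ?_, fun x y u w hxy huw hne => ?_⟩
  · obtain ⟨a, b, hab, hbn, -, he⟩ := mem_E_iff.1 hxy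
    have hne : P a ≠ P b := P.injective.ne hab.ne
    rcases Sym2.eq_iff.1 he with ⟨rfl, rfl⟩ | ⟨rfl, rfl⟩
    · exact ⟨P_mem_V.2 (by omega), P_mem_V.2 hbn, hne⟩
    · exact ⟨P_mem_V.2 hbn, P_mem_V.2 (by omega), hne.symm⟩
  · obtain ⟨a, b, hab, -, -, he⟩ := mem_E_iff.1 hxy
    obtain ⟨m, -, rfl⟩ := mem_map.1 hv
    rw [openSegment_eq_of_mk_eq he]
    exact parabola_notMem_openSegment (Nat.cast_lt.2 hab) m
  · obtain ⟨a, b, hab, -, hfan, he⟩ := mem_E_iff.1 hxy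
    obtain ⟨c, d, hcd, -, hfan', he'⟩ := mem_E_iff.1 huw
    rw [openSegment_eq_of_mk_eq he, openSegment_eq_of_mk_eq he']
    have hne' : (a, b) ≠ (c, d) := by
      rintro ⟨⟩
      exact hne (he.trans he'.symm)
    refine openSegment_parabola_inter_eq_empty (Nat.cast_lt.2 hab) (Nat.cast_lt.2 hcd)
      (fun h => hne' ?_) ?_ ?_
    · simp only [Prod.mk.injEq, Nat.cast_inj] at h ⊢
      exact h
    · exact_mod_cast (by omega : ¬ (a < c ∧ c < b ∧ b < d))
    · exact_mod_cast (by omega : ¬ (c < a ∧ a < d ∧ d < b))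

def G (n : ℕ) : PSLG := ⟨V n, E n, validEdges n⟩

theorem exists_crossing_of_lt {n i j : ℕ} (hij : i < j) (hj : j < n) (hE : s(P i, P j) ∉ E n) :
    ∃ c d, s(c, d) ∈ E n ∧ (openSegment ℝ (P i) (P j) ∩ openSegment ℝ c d).Nonempty := by
  have hfan : ¬ (i = 0 ∨ j = i + 1) := fun h =>
    hE (mem_E_iff.2 ⟨i, j, hij, hj, h, rfl⟩)
  -- the chord `P i P j` separates `P 0` from `P (i + 1)`
  refine ⟨P 0, P (i + 1), mem_E_iff.2 ⟨0, i + 1, by omega, by omega, Or.inl rfl, rfl⟩, ?_⟩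
  rw [Set.inter_comm]
  simp only [P_apply, Nat.cast_zero, Nat.cast_succ]
  exact openSegment_parabola_inter_nonempty (by exact_mod_cast (by omega : 0 < i))
    (by linarith) (by exact_mod_cast (by omega : i + 1 < j))

theorem isTriangulation (n : ℕ) : (G n).IsTriangulation := by
  refine PSLG.isTriangulation_of_forall_crossing _ fun x hx y hy hxy hE => ?_
  obtain ⟨i, hi, rfl⟩ := mem_map.1 hx
  obtain ⟨j, hj, rfl⟩ := mem_map.1 hy
  rcases lt_or_gt_of_ne (P.injective.ne_iff.1 hxy) with h | h
  · exact exists_crossing_of_lt h (mem_range.1 hj) hE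
  · rw [openSegment_symm]
    exact exists_crossing_of_lt h (mem_range.1 hi) (Sym2.eq_swap ▸ hE)

theorem isOrientation (n : ℕ) : IsOrientation (G n) (D n) := by
  refine isOrientation_of_antisymm rfl fun x y hxy hyx => ?_
  obtain ⟨i, j, hij, hp⟩ := exists_of_mem_D hxy
  simp only [Prod.mk.injEq] at hp
  obtain ⟨rfl, rfl⟩ := hp
  rw [mem_D, mem_arcs] at hyx
  rw [mem_arcs] at hij
  omega

theorem notMem_D_self {n : ℕ} (x : Pt) : (x, x) ∉ D n := fun hx => by
  obtain ⟨i, j, hij, hp⟩ := exists_of_mem_D hx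
  simp only [Prod.mk.injEq] at hp
  rw [mem_arcs, P.injective (hp.1.symm.trans hp.2)] at hij
  omega

/-- `P 0` is a sink, and every path arc is oriented from an even to an odd index. -/
theorem mem_chainD_of_mem_D_of_mem_D {n : ℕ} {x y z : Pt} (hxy : (x, y) ∈ D n)
    (hyz : (y, z) ∈ D n) : (x, y) ∈ chainD n ∧ z = P 0 := by
  obtain ⟨i, j, hij, hp⟩ := exists_of_mem_D hxy
  obtain ⟨j', k, hjk, hp'⟩ := exists_of_mem_D hyz
  simp only [Prod.mk.injEq] at hp hp'
  obtain ⟨rfl, rfl⟩ := hp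
  obtain ⟨hj, rfl⟩ := hp'
  obtain rfl := P.injective hj
  rw [mem_arcs] at hij hjk
  refine ⟨mem_map' (P.prodMap P) |>.2 (mem_chainArcs.2 (by omega)), congrArg P (by omega)⟩

theorem notMem_D_of_mem_D_of_mem_D {n : ℕ} {a b c d : Pt} (hab : (a, b) ∈ D n)
    (hbc : (b, c) ∈ D n) : (c, d) ∉ D n := by
  rw [(mem_chainD_of_mem_D_of_mem_D hab hbc).2]
  intro h
  obtain ⟨i, j, hij, hp⟩ := exists_of_mem_D h
  simp only [Prod.mk.injEq] at hp
  rw [mem_arcs, ← P.injective hp.1] at hij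
  omega

theorem setOf_isDirPath_length_three (n : ℕ) :
    {L | IsDirPath (D n) L ∧ L.length = 3} = ↑((chainD n).image fun p => [p.1, p.2, P 0]) := by
  ext L
  constructor
  · rintro ⟨hL, hlen⟩
    match L, hlen with
    | [a, b, c], _ =>
      obtain ⟨-, hab, hbc⟩ := isDirPath_triple_iff.1 hL
      obtain ⟨habc, rfl⟩ := mem_chainD_of_mem_D_of_mem_D hab hbc
      exact mem_image.2 ⟨(a, b), habc, rfl⟩
  · intro hL
    obtain ⟨p, hp, rfl⟩ := mem_image.1 hL
    obtain ⟨⟨i, j⟩, hij, rfl⟩ := mem_map.1 hp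
    have hij' := mem_chainArcs.1 hij
    refine ⟨isDirPath_triple_iff.2 ⟨?_, mem_D.2 (mem_union_right _ hij), mem_D.2 ?_⟩, rfl⟩
    · simp only [Function.Embedding.prodMap, Function.Embedding.coeFn_mk, Prod.map,
        List.nodup_cons, List.mem_cons, P.injective.eq_iff, List.not_mem_nil, or_false,
        List.nodup_nil, not_false_eq_true, and_true]
      omega
    · rw [mem_arcs]
      omega

theorem card_chainD_image (n : ℕ) :
    ((chainD n).image fun p => [p.1, p.2, P 0]).card = n - 2 := by
  rw [card_image_of_injective _ fun p q h => by
    simp only [List.cons.injEq, and_true] at h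
    exact Prod.ext h.1 h.2, chainD, card_map, card_chainArcs]

end ParabolaFan

theorem directed_triangulation_tight_general (n : ℕ) :
    ∃ (G : PSLG) (D : Finset (Pt × Pt)),
      G.IsTriangulation ∧ G.V.card = n ∧ IsOrientation G D ∧
      Set.ncard {L : List Pt | IsDirPath D L ∧ L.length = 2} = 2 * n - 3 ∧
      Set.ncard {L : List Pt | IsDirPath D L ∧ L.length = 3} = n - 2 ∧
      (∀ L : List Pt, IsDirPath D L → L.length ≤ 3) ∧
      dirPathCount D = 3 * n - 5 := by
  open ParabolaFan in
  have h₂ := setOf_isDirPath_length_two (notMem_D_self (n := n))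
  have h₃ := setOf_isDirPath_length_three n
  have hlen : ∀ L, IsDirPath (D n) L → L.length ≤ 3 := fun L =>
    IsDirPath.length_le_three fun _ _ _ _ => notMem_D_of_mem_D_of_mem_D
  have hcard₂ : {L | IsDirPath (D n) L ∧ L.length = 2}.ncard = 2 * n - 3 := by
    rw [h₂, Set.ncard_coe_finset, card_image_pair, D, Finset.card_map, card_arcs]
  have hcard₃ : {L | IsDirPath (D n) L ∧ L.length = 3}.ncard = n - 2 := by
    rw [h₃, Set.ncard_coe_finset, card_chainD_image]
  refine ⟨G n, D n, isTriangulation n, card_V n, isOrientation n, hcard₂, hcard₃, hlen, ?_⟩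
  rw [dirPathCount_eq_add hlen (h₂ ▸ Finset.finite_toSet _) (h₃ ▸ Finset.finite_toSet _),
    hcard₂, hcard₃]
  omega

/-- for every `n ≥ 3` there is an oriented triangulation of `n` points
with exactly `3n − 5` directed simple paths: `2n − 3` of length 1, `n − 2` of length 2,
and none longer. -/
theorem directed_triangulation_tight (n : ℕ) (hn : 3 ≤ n) :
    ∃ (G : PSLG) (D : Finset (Pt × Pt)),
      G.IsTriangulation ∧ G.V.card = n ∧ IsOrientation G D ∧
      Set.ncard {L : List Pt | IsDirPath D L ∧ L.length = 2} = 2 * n - 3 ∧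
      Set.ncard {L : List Pt | IsDirPath D L ∧ L.length = 3} = n - 2 ∧
      (∀ L : List Pt, IsDirPath D L → L.length ≤ 3) ∧
      dirPathCount D = 3 * n - 5 :=
  directed_triangulation_tight_general n
end
end
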